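/- Each matrix S(a,b), M'(λ), and T preserves the set O, i.e., for each generator g of Sz(q) and each point P in O, the point P·g lies in O. Here O = {(1:0:0:0)} ∪ {(ab + a^(t+2) + b^t : b : a : 1) : a, b in F_q} ⊆ P^3(F_q). -/

import Mathlib

open Matrix

noncomputable section

/-- The matrix `S(a, b)` generating the Frobenius kernel of a point stabiliser in `Sz(q)`. -/
def Smat {F : Type*} [Field F] (t : ℕ) (a b : F) : Matrix (Fin 4) (Fin 4) F :=
  !![1, 0, 0, 0;
     a, 1, 0, 0;
     b, a ^ t, 1, 0;
     a ^ (2 + t) + a * b + b ^ t, a ^ (1 + t) + b, a, 1]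

/-- The diagonal matrix `M'(λ) = diag(λ^(t+1), λ, λ⁻¹, λ^(-t-1))`. -/
def Mmat {F : Type*} [Field F] (t : ℕ) (u : Fˣ) : Matrix (Fin 4) (Fin 4) F :=
  !![(u : F) ^ (t + 1), 0, 0, 0;
     0, (u : F), 0, 0;
     0, 0, ((u⁻¹ : Fˣ) : F), 0;
     0, 0, 0, ((u⁻¹ : Fˣ) : F) ^ (t + 1)]

/-- The antidiagonal permutation matrix `T`. -/
def Tmat (F : Type*) [Field F] : Matrix (Fin 4) (Fin 4) F :=
  !![0, 0, 0, 1;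
     0, 0, 1, 0;
     0, 1, 0, 0;
     1, 0, 0, 0]
/-- The Suzuki ovoid `O ⊆ P³(F_q)`:
`{(1:0:0:0)} ∪ {(ab + a^(t+2) + bᵗ : b : a : 1) : a, b ∈ F_q}`. -/
def ovoid (F : Type*) [Field F] (t : ℕ) : Set (Projectivization F (Fin 4 → F)) :=
  {P | (∃ h : (![1, 0, 0, 0] : Fin 4 → F) ≠ 0,
          P = Projectivization.mk F ![1, 0, 0, 0] h) ∨
       (∃ a b : F, ∃ h : (![a * b + a ^ (t + 2) + b ^ t, b, a, 1] : Fin 4 → F) ≠ 0,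
          P = Projectivization.mk F ![a * b + a ^ (t + 2) + b ^ t, b, a, 1] h)}

/-!
Write `f(a, b) = ab + a^(t+2) + bᵗ`, so that the affine points of `O` are
`(f(a, b) : b : a : 1)`. Since `q = 2^(2m+1)`, the map `x ↦ xᵗ` is additive and squares to
the Frobenius `x ↦ x²`. With these two rules one checks that `S(a, b)` moves the affine points
by the translation `(a', b') ↦ (a' + a, b' + a'aᵗ + a^(1+t) + b)` of `f`'s arguments, that
`M'(λ)` rescales `(a, b) ↦ (aλᵗ, bλ^(t+2))`, which multiplies `f` by `λ^(2t+2)`, and that `T`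
sends `(a, b)` to `(b / f, a / f)`, where `f(b / f, a / f) = 1 / f`. Finally `f(a, b) = 0`
only at `a = b = 0`, and `T` swaps that point `(0:0:0:1)` with `(1:0:0:0)`.
-/

def ovoidForm {F : Type*} [Field F] (t : ℕ) (a b : F) : F :=
  a * b + a ^ (t + 2) + b ^ t

def PreservesOvoid {F : Type*} [Field F] (t : ℕ) (g : Matrix (Fin 4) (Fin 4) F) : Prop :=
  ∀ (v : Fin 4 → F) (hv : v ≠ 0), Projectivization.mk F v hv ∈ ovoid F t →
    ∃ hw : vecMul v g ≠ 0, Projectivization.mk F (vecMul v g) hw ∈ ovoid F t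

lemma Projectivization.exists_mk_smul_mem {K V : Type*} [DivisionRing K] [AddCommGroup V]
    [Module K V] {S : Set (Projectivization K V)} {w : V} (c : Kˣ)
    (h : ∃ hw : w ≠ 0, mk K w hw ∈ S) :
    ∃ hw : c • w ≠ 0, mk K (c • w) hw ∈ S := by
  obtain ⟨hw, hmem⟩ := h
  refine ⟨smul_ne_zero c.ne_zero hw, ?_⟩
  rwa [(mk_eq_mk_iff K _ _ _ hw).mpr ⟨c, rfl⟩]

section Ovoid

variable {F : Type*} [Field F] {t : ℕ}

lemma exists_mk_e0_mem_ovoid :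
    ∃ hw : (![1, 0, 0, 0] : Fin 4 → F) ≠ 0, Projectivization.mk F _ hw ∈ ovoid F t := by
  have hw : (![1, 0, 0, 0] : Fin 4 → F) ≠ 0 := fun h ↦ by simpa using congrFun h 0
  exact ⟨hw, Or.inl ⟨hw, rfl⟩⟩

lemma exists_mk_mem_ovoid (a b : F) :
    ∃ hw : (![ovoidForm t a b, b, a, 1] : Fin 4 → F) ≠ 0,
      Projectivization.mk F _ hw ∈ ovoid F t := by
  have hw : (![ovoidForm t a b, b, a, 1] : Fin 4 → F) ≠ 0 := fun h ↦ by
    simpa using congrFun h 3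
  exact ⟨hw, Or.inr ⟨a, b, hw, rfl⟩⟩

lemma preservesOvoid_of_vecMul {g : Matrix (Fin 4) (Fin 4) F}
    (h₀ : ∃ hw : vecMul ![1, 0, 0, 0] g ≠ 0,
      Projectivization.mk F (vecMul ![1, 0, 0, 0] g) hw ∈ ovoid F t)
    (h₁ : ∀ a b : F, ∃ hw : vecMul ![ovoidForm t a b, b, a, 1] g ≠ 0,
      Projectivization.mk F (vecMul ![ovoidForm t a b, b, a, 1] g) hw ∈ ovoid F t) :
    PreservesOvoid t g := by
  intro v hv hmem
  obtain ⟨w, hw, hvw, hmem'⟩ :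
      ∃ w hw, Projectivization.mk F v hv = Projectivization.mk F w hw ∧
      ∃ hw : vecMul w g ≠ 0, Projectivization.mk F (vecMul w g) hw ∈ ovoid F t := by
    rcases hmem with ⟨hw, he⟩ | ⟨a, b, hw, he⟩
    exacts [⟨_, hw, he, h₀⟩, ⟨_, hw, he, h₁ a b⟩]
  obtain ⟨c, rfl⟩ := (Projectivization.mk_eq_mk_iff F v w hv hw).mp hvw
  simpa only [Units.smul_def, smul_vecMul] using Projectivization.exists_mk_smul_mem c hmem'

lemma ovoidForm_scale (hσ : ∀ x : F, (x ^ t) ^ t = x ^ 2) (a b x : F) :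
    ovoidForm t (a * x ^ t) (b * x ^ (t + 2)) =
      (x ^ (t + 1)) ^ 2 * ovoidForm t a b := by
  simp only [ovoidForm, mul_pow, pow_add, hσ]
  ring

lemma vecMul_Smat (a b x y z w : F) :
    vecMul ![x, y, z, w] (Smat t a b) =
      ![x + y * a + z * b + w * (a ^ (2 + t) + a * b + b ^ t),
        y + z * a ^ t + w * (a ^ (1 + t) + b), z + w * a, w] := by
  ext i; fin_cases i <;> simp [Smat, vecMul, dotProduct, Fin.sum_univ_four]

lemma vecMul_Mmat (u : Fˣ) (x y z w : F) :
    vecMul ![x, y, z, w] (Mmat t u) =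
      ![x * u ^ (t + 1), y * u, z * u⁻¹, w * (u⁻¹) ^ (t + 1)] := by
  ext i; fin_cases i <;> simp [Mmat, vecMul, dotProduct, Fin.sum_univ_four]

lemma vecMul_Tmat (x y z w : F) : vecMul ![x, y, z, w] (Tmat F) = ![w, z, y, x] := by
  ext i; fin_cases i <;> simp [Tmat, vecMul, dotProduct, Fin.sum_univ_four]

lemma Mmat_preservesOvoid (hσ : ∀ x : F, (x ^ t) ^ t = x ^ 2) (u : Fˣ) :
    PreservesOvoid (t) (Mmat (t) u) := by
  refine preservesOvoid_of_vecMul ?_ fun a b ↦ ?_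
  · rw [show vecMul ![1, 0, 0, 0] (Mmat (t) u) = (u ^ (t + 1)) • ![1, 0, 0, 0] by
      ext i; fin_cases i <;> simp [vecMul_Mmat, Units.smul_def]]
    exact Projectivization.exists_mk_smul_mem _ exists_mk_e0_mem_ovoid
  · rw [show vecMul ![ovoidForm (t) a b, b, a, 1] (Mmat (t) u) =
        (u ^ (t + 1))⁻¹ • ![ovoidForm (t) (a * u ^ t) (b * u ^ (t + 2)),
          b * u ^ (t + 2), a * u ^ t, 1] by
      ext i; fin_cases i <;> simp [vecMul_Mmat, Units.smul_def, ovoidForm_scale hσ] <;>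
        field_simp <;> ring]
    exact Projectivization.exists_mk_smul_mem _ (exists_mk_mem_ovoid _ _)

end Ovoid

section CharTwo

variable {F : Type*} [Field F] [CharP F 2] {k : ℕ}

lemma ovoidForm_pow (hσ : ∀ x : F, (x ^ 2 ^ k) ^ 2 ^ k = x ^ 2) (a b : F) :
    ovoidForm (2 ^ k) a b ^ 2 ^ k = a ^ 2 ^ k * b ^ 2 ^ k + a ^ 2 * (a ^ 2 ^ k) ^ 2 + b ^ 2 := by
  rw [ovoidForm, add_pow_char_pow, add_pow_char_pow, mul_pow, pow_right_comm a (2 ^ k + 2),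
    pow_add, hσ, hσ]

lemma ovoidForm_eq_zero_iff (hσ : ∀ x : F, (x ^ 2 ^ k) ^ 2 ^ k = x ^ 2) {a b : F} :
    ovoidForm (2 ^ k) a b = 0 ↔ a = 0 ∧ b = 0 := by
  refine ⟨fun h ↦ ?_, fun ⟨ha, hb⟩ ↦ by simp [ovoidForm, ha, hb]⟩
  have h2 : (2 : F) = 0 := CharTwo.two_eq_zero
  have hpow := ovoidForm_pow hσ a b
  rw [h, zero_pow (by positivity)] at hpow
  rw [ovoidForm] at h
  have hb : b * (b + a * a ^ 2 ^ k) = 0 := by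
    linear_combination a ^ 2 ^ k * h - hpow - (a ^ 2 * (a ^ 2 ^ k) ^ 2 + a ^ 2 ^ k * b ^ 2 ^ k) * h2
  have ha : a ^ (2 ^ k + 2) = 0 := by
    rcases mul_eq_zero.mp hb with rfl | hb'
    · simpa using h
    · rw [CharTwo.add_eq_zero.mp hb', mul_pow, hσ] at h
      linear_combination h - a ^ (2 ^ k + 2) * h2
  obtain rfl : a = 0 := pow_eq_zero_iff (by positivity) |>.mp ha
  exact ⟨rfl, by simpa using h⟩

lemma ovoidForm_translate (hσ : ∀ x : F, (x ^ 2 ^ k) ^ 2 ^ k = x ^ 2) (a b a' b' : F) :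
    ovoidForm (2 ^ k) (a' + a) (b' + a' * a ^ 2 ^ k + (a ^ (1 + 2 ^ k) + b)) =
      ovoidForm (2 ^ k) a' b' + b' * a + a' * b + (a ^ (2 + 2 ^ k) + a * b + b ^ 2 ^ k) := by
  have h2 : (2 : F) = 0 := CharTwo.two_eq_zero
  simp only [ovoidForm, add_pow_char_pow, mul_pow, pow_add, hσ, pow_one]
  linear_combination (a' ^ 2 * a ^ 2 ^ k + a * a' * a' ^ 2 ^ k + 2 * a * a' * a ^ 2 ^ k
      + a ^ 2 * a' ^ 2 ^ k + a ^ 2 * a ^ 2 ^ k) * h2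

lemma ovoidForm_div (hσ : ∀ x : F, (x ^ 2 ^ k) ^ 2 ^ k = x ^ 2) {a b : F}
    (hc : ovoidForm (2 ^ k) a b ≠ 0) :
    ovoidForm (2 ^ k) (b / ovoidForm (2 ^ k) a b) (a / ovoidForm (2 ^ k) a b) =
      (ovoidForm (2 ^ k) a b)⁻¹ := by
  have h2 : (2 : F) = 0 := CharTwo.two_eq_zero
  set c := ovoidForm (2 ^ k) a b with hc_def
  have hct := ovoidForm_pow hσ a b
  rw [← hc_def] at hct
  rw [ovoidForm] at hc_def
  have key : a * b * c ^ 2 ^ k + b ^ (2 ^ k + 2) + a ^ 2 ^ k * c ^ 2 = c ^ (2 ^ k + 1) := by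
    linear_combination (a * b - c) * hct
      + (a ^ 2 ^ k * (c + (a * b + a ^ 2 * a ^ 2 ^ k + b ^ 2 ^ k))
        - (a ^ 2 ^ k * b ^ 2 ^ k + a ^ 2 * (a ^ 2 ^ k) ^ 2 + b ^ 2)) * hc_def
      + (a * b * a ^ 2 ^ k * b ^ 2 ^ k + a ^ 3 * b * (a ^ 2 ^ k) ^ 2) * h2
  calc ovoidForm (2 ^ k) (b / c) (a / c)
      = (a * b * c ^ 2 ^ k + b ^ (2 ^ k + 2) + a ^ 2 ^ k * c ^ 2) / c ^ (2 ^ k + 2) := by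
        rw [ovoidForm, div_pow, div_pow]
        field_simp
        ring
    _ = c⁻¹ := by
        rw [key]
        field_simp
        ring

lemma Smat_preservesOvoid (hσ : ∀ x : F, (x ^ 2 ^ k) ^ 2 ^ k = x ^ 2) (a b : F) :
    PreservesOvoid (2 ^ k) (Smat (2 ^ k) a b) := by
  refine preservesOvoid_of_vecMul ?_ fun a' b' ↦ ?_
  · rw [show vecMul ![1, 0, 0, 0] (Smat (2 ^ k) a b) = ![1, 0, 0, 0] by simp [vecMul_Smat]]
    exact exists_mk_e0_mem_ovoid
  · rw [show vecMul ![ovoidForm (2 ^ k) a' b', b', a', 1] (Smat (2 ^ k) a b) =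
        ![ovoidForm (2 ^ k) (a' + a) (b' + a' * a ^ 2 ^ k + (a ^ (1 + 2 ^ k) + b)),
          b' + a' * a ^ 2 ^ k + (a ^ (1 + 2 ^ k) + b), a' + a, 1] by
      simp [vecMul_Smat, ovoidForm_translate hσ]]
    exact exists_mk_mem_ovoid _ _

lemma Tmat_preservesOvoid (hσ : ∀ x : F, (x ^ 2 ^ k) ^ 2 ^ k = x ^ 2) :
    PreservesOvoid (2 ^ k) (Tmat F) := by
  refine preservesOvoid_of_vecMul ?_ fun a b ↦ ?_
  · rw [show vecMul ![1, 0, 0, 0] (Tmat F) = ![ovoidForm (2 ^ k) 0 0, 0, 0, 1] by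
      simp [vecMul_Tmat, ovoidForm]]
    exact exists_mk_mem_ovoid _ _
  rw [vecMul_Tmat]
  by_cases hc : ovoidForm (2 ^ k) a b = 0
  · obtain ⟨rfl, rfl⟩ := (ovoidForm_eq_zero_iff hσ).mp hc
    rw [hc]
    exact exists_mk_e0_mem_ovoid
  · rw [show ![1, a, b, ovoidForm (2 ^ k) a b] = Units.mk0 _ hc •
        ![ovoidForm (2 ^ k) (b / ovoidForm (2 ^ k) a b) (a / ovoidForm (2 ^ k) a b),
          a / ovoidForm (2 ^ k) a b, b / ovoidForm (2 ^ k) a b, 1] by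
      ext i; fin_cases i <;> simp [Units.smul_def, ovoidForm_div hσ hc, hc, mul_div_cancel₀]]
    exact Projectivization.exists_mk_smul_mem _ (exists_mk_mem_ovoid _ _)

end CharTwo

lemma pow_pow_eq_sq_of_card_eq_two_pow {F : Type*} [Field F] [Fintype F] {m : ℕ}
    (hF : Fintype.card F = 2 ^ (2 * m + 1)) (x : F) :
    (x ^ 2 ^ (m + 1)) ^ 2 ^ (m + 1) = x ^ 2 := by
  rw [← pow_mul, ← pow_add, show m + 1 + (m + 1) = 2 * m + 1 + 1 by ring, pow_succ, pow_mul,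
    ← hF, FiniteField.pow_card]

/-- Each generator `S(a,b)`, `M'(λ)`, `T` of `Sz(q)` preserves the ovoid `O` under the
action by right multiplication on row vectors. -/
theorem generators_preserve_ovoid (m : ℕ) (F : Type*) [Field F] [Fintype F]
    (hF : Fintype.card F = 2 ^ (2 * m + 1))
    (g : Matrix (Fin 4) (Fin 4) F)
    (hg : (∃ a b : F, g = Smat (2 ^ (m + 1)) a b) ∨
          (∃ u : Fˣ, g = Mmat (2 ^ (m + 1)) u) ∨ g = Tmat F) :
    ∀ (v : Fin 4 → F) (hv : v ≠ 0),
      Projectivization.mk F v hv ∈ ovoid F (2 ^ (m + 1)) →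
      ∃ hw : Matrix.vecMul v g ≠ 0,
        Projectivization.mk F (Matrix.vecMul v g) hw ∈ ovoid F (2 ^ (m + 1)) := by
  have : CharP F 2 := charP_of_card_eq_prime_pow hF
  have hσ := pow_pow_eq_sq_of_card_eq_two_pow hF
  rcases hg with ⟨a, b, rfl⟩ | ⟨u, rfl⟩ | rfl
  exacts [Smat_preservesOvoid hσ a b, Mmat_preservesOvoid hσ u, Tmat_preservesOvoid hσ]
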